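/- If A is a dense subring of B, then the map i* : Spec B → Spec A, P ↦ P ∩ A, is an open map onto its image: for every f ∈ B, the image i*(X_f^B) of the basic open set X_f^B is open in the subspace i*(Spec B) of Spec A. -/

import Mathlib

def IsDenseSubring {B : Type*} [CommRing B] (A : Subring B) : Prop :=
  ∀ I : Ideal B, ∀ b ∉ I.radical, ∃ a ∉ I.radical, a * b ∈ A

/-!
Let `J ⊆ A` be the contraction of the principal ideal `f B`. For a prime `P` of `B`, the
contraction `P ∩ A` contains `J` exactly when `f ∈ P`: one direction is monotonicity of
contraction, and if `f ∉ P`, density yields `a ∉ P` with `a f ∈ J \ P`. Hence `X_f^B` is the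
preimage of the open set `Spec A \ V(J)`, and the image of a preimage is its trace on the image.
-/

open PrimeSpectrum

namespace IsDenseSubring

variable {B : Type*} [CommRing B] {A : Subring B}

theorem exists_notMem_mul_mem_of_isPrime (hA : IsDenseSubring A) {P : Ideal B} [P.IsPrime]
    {b : B} (hb : b ∉ P) : ∃ a ∉ P, a * b ∈ A := by
  have hb' : b ∉ P.radical := by rwa [Ideal.IsPrime.radical ‹_›]
  simpa only [Ideal.IsPrime.radical ‹P.IsPrime›] using hA P b hb'

theorem preimage_comap_zeroLocus_span_singleton (hA : IsDenseSubring A) (f : B) :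
    comap A.subtype ⁻¹' zeroLocus ((Ideal.span {f}).comap A.subtype : Set A) =
      zeroLocus {f} := by
  ext P
  simp only [Set.mem_preimage, mem_zeroLocus, SetLike.coe_subset_coe, comap_asIdeal,
    Set.singleton_subset_iff, SetLike.mem_coe]
  constructor
  · intro hle
    by_contra hf
    obtain ⟨a, haP, haf⟩ := hA.exists_notMem_mul_mem_of_isPrime hf
    have hafJ : (⟨a * f, haf⟩ : A) ∈ (Ideal.span {f}).comap A.subtype :=
      Ideal.mem_span_singleton'.mpr ⟨a, rfl⟩
    exact (P.isPrime.mem_or_mem (hle hafJ)).elim haP hf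
  · intro hf
    exact Ideal.comap_mono ((Ideal.span_singleton_le_iff_mem _).mpr hf)

end IsDenseSubring

theorem stmt_12 {B : Type*} [CommRing B] (A : Subring B) (hA : IsDenseSubring A) :
    ∀ f : B, ∃ U : Set (PrimeSpectrum A), IsOpen U ∧
      PrimeSpectrum.comap A.subtype '' (PrimeSpectrum.basicOpen f : Set (PrimeSpectrum B)) =
        U ∩ Set.range (PrimeSpectrum.comap A.subtype) := by
  intro f
  refine ⟨(zeroLocus ((Ideal.span {f}).comap A.subtype : Set A))ᶜ,
    (isClosed_zeroLocus _).isOpen_compl, ?_⟩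
  rw [basicOpen_eq_zeroLocus_compl, ← hA.preimage_comap_zeroLocus_span_singleton,
    ← Set.preimage_compl, Set.image_preimage_eq_inter_range]
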